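/- arXiv:2605.07629 — 2 statements merged into one kernel-verified Lean document; each statement's English description precedes it below -/
import Mathlib

section
/- Let β : ℝ → ℂ be smooth with support contained in (1/2, 2). For every positive integer N there is a constant C_N (depending only on β and N) such that for all λ ≥ 1, all δ ∈ (0, 1/2), all j ∈ ℤ, and all τ ≥ 0, the symbol m_j(τ) = (i(λ+iδ))⁻¹ ∫₀^∞ β(2^{−j} t) e^{itλ − tδ} cos(tτ) dt (an absolutely convergent integral) satisfies |m_j(τ)| ≤ C_N λ^{−1} 2^j (1 + 2^j |τ − λ|)^{−N}. -/
open MeasureTheory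
open scoped ENNReal

noncomputable section

/-- The symbol of the dyadic-in-time resolvent piece, with a complex-valued cutoff `β`:
`m_j(τ) = (i(λ+iδ))⁻¹ ∫₀^∞ β(2^{−j}t) e^{itλ − tδ} cos(tτ) dt`. -/
noncomputable def msymC (β : ℝ → ℂ) (lam δ : ℝ) (j : ℤ) (τ : ℝ) : ℂ :=
  (Complex.I * ((lam : ℂ) + Complex.I * (δ : ℂ)))⁻¹ *
    ∫ t in Set.Ioi (0:ℝ),
      β ((2:ℝ) ^ (-j) * t) *
        Complex.exp (Complex.I * ((t * lam : ℝ) : ℂ) - ((t * δ : ℝ) : ℂ)) *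
        Complex.cos (((t * τ : ℝ) : ℂ))

/-! Writing `cos (tτ) = (e^{itτ} + e^{-itτ}) / 2` splits `m_j(τ)` into two integrals
`∫ β(2^{-j} t) e^{zt} dt` with `z = i(λ ± τ) - δ`, so that `Re z ≤ 0` and `|z| ≥ |τ - λ|`.
The substitution `t = 2^j s` turns each into `2^j ∫ β(s) e^{ws} ds` with `w = 2^j z`, and `N`
integrations by parts give `|w|^N |∫ β(s) e^{ws} ds| ≤ ∫ |β^{(N)}|`, since `|e^{ws}| ≤ 1` on
the support of `β`, which lies in `s > 0`. -/

theorem tsupport_iteratedDeriv_subset {𝕜 E : Type*} [NontriviallyNormedField 𝕜]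
    [NormedAddCommGroup E] [NormedSpace 𝕜 E] (f : 𝕜 → E) (n : ℕ) :
    tsupport (iteratedDeriv n f) ⊆ tsupport f := by
  induction n with
  | zero => simp
  | succ n ih => exact (iteratedDeriv_succ (f := f) ▸ tsupport_deriv_subset).trans ih

section LaplaceDecay

variable {F : ℝ → ℂ}

theorem mul_integral_mul_cexp_eq_neg_integral_deriv_mul (hF : ContDiff ℝ 1 F)
    (hFc : HasCompactSupport F) (w : ℂ) :
    w * ∫ s : ℝ, F s * Complex.exp (w * s) = -∫ s : ℝ, deriv F s * Complex.exp (w * s) := by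
  have hexp : ∀ s : ℝ, HasDerivAt (fun s : ℝ => Complex.exp (w * s))
      (w * Complex.exp (w * s)) s := fun s => by
    simpa [mul_comm] using ((Complex.ofRealCLM.hasDerivAt (x := s)).const_mul w).cexp
  have hcont : Continuous fun s : ℝ => Complex.exp (w * s) := by fun_prop
  have hF' : Continuous (deriv F) := hF.continuous_deriv le_rfl
  rw [← integral_const_mul]
  simp_rw [mul_left_comm w]
  exact integral_mul_deriv_eq_deriv_mul_of_integrable
    (fun s _ => (hF.differentiable one_ne_zero s).hasDerivAt) (fun s _ => hexp s)
    ((hF.continuous.mul (continuous_const.mul hcont)).integrable_of_hasCompactSupport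
      hFc.mul_right)
    ((hF'.mul hcont).integrable_of_hasCompactSupport hFc.deriv.mul_right)
    ((hF.continuous.mul hcont).integrable_of_hasCompactSupport hFc.mul_right)

theorem pow_mul_integral_mul_cexp_eq_integral_iteratedDeriv_mul (N : ℕ) (hF : ContDiff ℝ N F)
    (hFc : HasCompactSupport F) (w : ℂ) :
    w ^ N * ∫ s : ℝ, F s * Complex.exp (w * s)
      = (-1) ^ N * ∫ s : ℝ, iteratedDeriv N F s * Complex.exp (w * s) := by
  induction N generalizing F with
  | zero => simp
  | succ N ih =>
    obtain ⟨-, -, hF'⟩ := (contDiff_succ_iff_deriv (n := N)).mp (by exact_mod_cast hF)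
    rw [pow_succ, mul_assoc,
      mul_integral_mul_cexp_eq_neg_integral_deriv_mul (hF.of_le (by simp)) hFc, mul_neg,
      ih hF' hFc.deriv, iteratedDeriv_succ']
    ring

theorem norm_pow_mul_norm_integral_mul_cexp_le (N : ℕ) (hF : ContDiff ℝ N F)
    (hFc : HasCompactSupport F) (hF0 : tsupport F ⊆ Set.Ici 0) {w : ℂ} (hw : w.re ≤ 0) :
    ‖w‖ ^ N * ‖∫ s : ℝ, F s * Complex.exp (w * s)‖ ≤ ∫ s : ℝ, ‖iteratedDeriv N F s‖ := by
  have hbound :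
      ∀ s : ℝ, ‖iteratedDeriv N F s * Complex.exp (w * s)‖ ≤ ‖iteratedDeriv N F s‖ := by
    intro s
    by_cases hs : s ∈ tsupport (iteratedDeriv N F)
    · have hs0 : 0 ≤ s := hF0 (tsupport_iteratedDeriv_subset F N hs)
      rw [norm_mul, Complex.norm_exp]
      refine mul_le_of_le_one_right (norm_nonneg _) (Real.exp_le_one_iff.mpr ?_)
      simpa using mul_nonpos_of_nonpos_of_nonneg hw hs0
    · simp [image_eq_zero_of_notMem_tsupport hs]
  rw [← norm_pow, ← norm_mul, pow_mul_integral_mul_cexp_eq_integral_iteratedDeriv_mul N hF hFc,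
    norm_mul, norm_pow, norm_neg, norm_one, one_pow, one_mul]
  exact norm_integral_le_of_norm_le
    (((hF.continuous_iteratedDeriv N le_rfl).norm).integrable_of_hasCompactSupport
      (hFc.mono' ((subset_tsupport _).trans (tsupport_iteratedDeriv_subset F N))).norm)
    (Filter.Eventually.of_forall hbound)

theorem one_add_norm_pow_mul_norm_integral_mul_cexp_le (N : ℕ) (hF : ContDiff ℝ N F)
    (hFc : HasCompactSupport F) (hF0 : tsupport F ⊆ Set.Ici 0) {w : ℂ} (hw : w.re ≤ 0) :
    (1 + ‖w‖) ^ N * ‖∫ s : ℝ, F s * Complex.exp (w * s)‖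
      ≤ 2 ^ (N - 1) * ((∫ s : ℝ, ‖F s‖) + ∫ s : ℝ, ‖iteratedDeriv N F s‖) := by
  have h0 := norm_pow_mul_norm_integral_mul_cexp_le 0 (hF.of_le zero_le) hFc hF0 hw
  have hN := norm_pow_mul_norm_integral_mul_cexp_le N hF hFc hF0 hw
  rw [pow_zero, one_mul, iteratedDeriv_zero] at h0
  calc (1 + ‖w‖) ^ N * ‖∫ s : ℝ, F s * Complex.exp (w * s)‖
      ≤ 2 ^ (N - 1) * (1 ^ N + ‖w‖ ^ N) * ‖∫ s : ℝ, F s * Complex.exp (w * s)‖ := by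
        gcongr; exact add_pow_le zero_le_one (norm_nonneg w) N
    _ = 2 ^ (N - 1) * (‖∫ s : ℝ, F s * Complex.exp (w * s)‖
          + ‖w‖ ^ N * ‖∫ s : ℝ, F s * Complex.exp (w * s)‖) := by ring
    _ ≤ 2 ^ (N - 1) * ((∫ s : ℝ, ‖F s‖) + ∫ s : ℝ, ‖iteratedDeriv N F s‖) := by gcongr

theorem one_add_mul_norm_pow_mul_norm_integral_comp_inv_mul_le (N : ℕ) (hF : ContDiff ℝ N F)
    (hFc : HasCompactSupport F) (hF0 : tsupport F ⊆ Set.Ici 0) {R : ℝ} (hR : 0 < R) {z : ℂ}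
    (hz : z.re ≤ 0) :
    (1 + R * ‖z‖) ^ N * ‖∫ t : ℝ, F (R⁻¹ * t) * Complex.exp (z * t)‖
      ≤ R * (2 ^ (N - 1) * ((∫ s : ℝ, ‖F s‖) + ∫ s : ℝ, ‖iteratedDeriv N F s‖)) := by
  have hscale : ∫ t : ℝ, F (R⁻¹ * t) * Complex.exp (z * t)
      = R • ∫ s : ℝ, F s * Complex.exp ((R * z) * s) := by
    have h := Measure.integral_comp_inv_mul_left (fun s : ℝ => F s * Complex.exp ((R * z) * s)) R
    rw [abs_of_pos hR] at h
    rw [← h]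
    congr 1 with t
    congr 2
    push_cast
    field_simp [hR.ne']
  have hRz : ‖(R : ℂ) * z‖ = R * ‖z‖ := by
    rw [norm_mul, Complex.norm_real, Real.norm_of_nonneg hR.le]
  have hRz_re : ((R : ℂ) * z).re ≤ 0 := by
    rw [Complex.re_ofReal_mul]; exact mul_nonpos_of_nonneg_of_nonpos hR.le hz
  rw [hscale, norm_smul, Real.norm_of_nonneg hR.le, mul_left_comm, ← hRz]
  exact mul_le_mul_of_nonneg_left
    (one_add_norm_pow_mul_norm_integral_mul_cexp_le N hF hFc hF0 hRz_re) hR.le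

end LaplaceDecay

theorem integrable_comp_mul_mul_cexp {F : ℝ → ℂ} (hF : Continuous F)
    (hFc : HasCompactSupport F) {c : ℝ} (hc : c ≠ 0) (z : ℂ) :
    Integrable fun t : ℝ => F (c * t) * Complex.exp (z * t) :=
  ((hF.comp (continuous_const_mul c)).mul (by fun_prop)).integrable_of_hasCompactSupport
    (hFc.comp_smul hc).mul_right

theorem msymC_eq_inv_mul_half_add {β : ℝ → ℂ} (hβ : Continuous β) (hβc : HasCompactSupport β)
    (hβ0 : tsupport β ⊆ Set.Ioi 0) (lam δ : ℝ) (j : ℤ) (τ : ℝ) :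
    msymC β lam δ j τ = (Complex.I * (lam + Complex.I * δ))⁻¹ * (2⁻¹ *
      ((∫ t : ℝ, β (((2 : ℝ) ^ j)⁻¹ * t) * Complex.exp ((Complex.I * (lam + τ) - δ) * t)) +
        ∫ t : ℝ, β (((2 : ℝ) ^ j)⁻¹ * t) * Complex.exp ((Complex.I * (lam - τ) - δ) * t))) := by
  have h2j : ((2 : ℝ) ^ j)⁻¹ ≠ 0 := by positivity
  rw [msymC, zpow_neg, setIntegral_eq_integral_of_forall_compl_eq_zero, ← integral_add
    (integrable_comp_mul_mul_cexp hβ hβc h2j _) (integrable_comp_mul_mul_cexp hβ hβc h2j _),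
    ← integral_const_mul (2⁻¹ : ℂ)]
  · congr 1
    congr 1 with t
    rw [Complex.cos]
    push_cast
    rw [mul_assoc, mul_div_assoc', mul_add, ← Complex.exp_add, ← Complex.exp_add]
    ring_nf
  · intro t ht
    have hneg : ((2 : ℝ) ^ j)⁻¹ * t ≤ 0 :=
      mul_nonpos_of_nonneg_of_nonpos (by positivity) (by simpa using ht)
    have : ((2 : ℝ) ^ j)⁻¹ * t ∉ tsupport β := fun h => (hβ0 h).not_ge hneg
    simp [image_eq_zero_of_notMem_tsupport this]

theorem abs_le_norm_I_mul_sub (a b : ℝ) : |a| ≤ ‖Complex.I * a - b‖ := by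
  simpa using Complex.abs_im_le_norm (Complex.I * a - b)

theorem norm_inv_I_mul_add_I_mul_le {lam : ℝ} (hlam : 0 < lam) (δ : ℝ) :
    ‖(Complex.I * (lam + Complex.I * δ))⁻¹‖ ≤ lam⁻¹ := by
  rw [norm_inv, norm_mul, Complex.norm_I, one_mul]
  refine inv_anti₀ hlam ?_
  simpa [abs_of_pos hlam] using Complex.abs_re_le_norm ((lam : ℂ) + Complex.I * δ)

theorem norm_msymC_le {β : ℝ → ℂ} (N : ℕ) (hβ : ContDiff ℝ N β) (hβc : HasCompactSupport β)
    (hβ0 : tsupport β ⊆ Set.Ioi 0) {lam δ τ : ℝ} (hlam : 0 < lam) (hδ : 0 ≤ δ) (hτ : 0 ≤ τ)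
    (j : ℤ) :
    ‖msymC β lam δ j τ‖ ≤ 2 ^ (N - 1) * ((∫ s : ℝ, ‖β s‖) + ∫ s : ℝ, ‖iteratedDeriv N β s‖) *
      lam⁻¹ * (2 : ℝ) ^ j * ((1 + (2 : ℝ) ^ j * |τ - lam|) ^ N)⁻¹ := by
  set K := 2 ^ (N - 1) * ((∫ s : ℝ, ‖β s‖) + ∫ s : ℝ, ‖iteratedDeriv N β s‖)
  set D := ((1 + (2 : ℝ) ^ j * |τ - lam|) ^ N)⁻¹
  have hpiece : ∀ z : ℂ, z.re ≤ 0 → |τ - lam| ≤ ‖z‖ →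
      ‖∫ t : ℝ, β (((2 : ℝ) ^ j)⁻¹ * t) * Complex.exp (z * t)‖ ≤ (2 : ℝ) ^ j * K * D := by
    intro z hz hτz
    rw [le_mul_inv_iff₀ (by positivity), mul_comm]
    calc (1 + (2 : ℝ) ^ j * |τ - lam|) ^ N *
          ‖∫ t : ℝ, β (((2 : ℝ) ^ j)⁻¹ * t) * Complex.exp (z * t)‖
        ≤ (1 + (2 : ℝ) ^ j * ‖z‖) ^ N *
          ‖∫ t : ℝ, β (((2 : ℝ) ^ j)⁻¹ * t) * Complex.exp (z * t)‖ := by gcongr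
      _ ≤ (2 : ℝ) ^ j * K := one_add_mul_norm_pow_mul_norm_integral_comp_inv_mul_le N hβ hβc
          (hβ0.trans Set.Ioi_subset_Ici_self) (by positivity) hz
  have hplus := hpiece (Complex.I * (lam + τ) - δ) (by simpa using hδ) <| by
    refine le_trans ?_ (by exact_mod_cast abs_le_norm_I_mul_sub (lam + τ) δ)
    rw [abs_of_nonneg (by linarith : 0 ≤ lam + τ), abs_sub_le_iff]
    constructor <;> linarith
  have hminus := hpiece (Complex.I * (lam - τ) - δ) (by simpa using hδ) <| by
    rw [abs_sub_comm]; exact_mod_cast abs_le_norm_I_mul_sub (lam - τ) δ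
  rw [msymC_eq_inv_mul_half_add hβ.continuous hβc hβ0, norm_mul, norm_mul,
    show ‖(2⁻¹ : ℂ)‖ = 2⁻¹ by norm_num]
  calc ‖(Complex.I * (lam + Complex.I * δ))⁻¹‖ * (2⁻¹ * ‖_ + _‖)
      ≤ lam⁻¹ * (2⁻¹ * ((2 : ℝ) ^ j * K * D + (2 : ℝ) ^ j * K * D)) := by
        gcongr
        · exact norm_inv_I_mul_add_I_mul_le hlam δ
        · exact (norm_add_le _ _).trans (add_le_add hplus hminus)
    _ = K * lam⁻¹ * (2 : ℝ) ^ j * D := by ring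

/-- Stationary-phase bound for the symbol of the dyadic resolvent
pieces:  `|m_j(τ)| ≤ C_N λ^{−1} 2^j (1 + 2^j |τ − λ|)^{−N}`, uniformly in `δ` and `j`. -/
theorem statement6
    (β : ℝ → ℂ) (hβ : ContDiff ℝ (⊤ : ℕ∞) β)
    (hβsupp : tsupport β ⊆ Set.Ioo (1/2 : ℝ) 2) :
    ∀ N : ℕ, 0 < N → ∃ C : ℝ, 0 < C ∧
      ∀ lam : ℝ, 1 ≤ lam → ∀ δ : ℝ, 0 < δ → δ < 1/2 →
        ∀ j : ℤ, ∀ τ : ℝ, 0 ≤ τ →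
          ‖msymC β lam δ j τ‖ ≤
            C * lam⁻¹ * (2:ℝ) ^ j * ((1 + (2:ℝ) ^ j * |τ - lam|) ^ N)⁻¹ := by
  intro N _
  have hβc : HasCompactSupport β :=
    isCompact_Icc.of_isClosed_subset (isClosed_tsupport β) (hβsupp.trans Set.Ioo_subset_Icc_self)
  have hβ0 : tsupport β ⊆ Set.Ioi 0 := hβsupp.trans fun s hs => lt_trans (by norm_num) hs.1
  set K := 2 ^ (N - 1) * ((∫ s : ℝ, ‖β s‖) + ∫ s : ℝ, ‖iteratedDeriv N β s‖)
  refine ⟨K + 1, by positivity, fun lam hlam δ hδ _ j τ hτ => ?_⟩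
  calc ‖msymC β lam δ j τ‖
      ≤ K * lam⁻¹ * (2 : ℝ) ^ j * ((1 + (2 : ℝ) ^ j * |τ - lam|) ^ N)⁻¹ :=
        norm_msymC_le N (hβ.of_le (by exact_mod_cast le_top)) hβc hβ0 (by linarith) hδ.le hτ j
    _ ≤ (K + 1) * lam⁻¹ * (2 : ℝ) ^ j * ((1 + (2 : ℝ) ^ j * |τ - lam|) ^ N)⁻¹ := by
        gcongr; linarith
end
end

section
/- Let A ≥ 0 and c₁ > 0. Let a : ℝ → ℝ be twice continuously differentiable with 0 ≤ a(r) ≤ 1 and a'(r) ≤ 0 for all r, a(r) = 1 for r ≤ A + 1/2, and a(r) = 0 for r ≥ A + 1. Let f : ℝ × ℝ → ℝ, written f(r, θ), be twice continuously differentiable in r, and assume that for all r ∈ [A, A+1] and all θ: ∂²_r f(r, θ) > 0, ∂_r f(r, θ) ≤ c₁ cosh(c₁ r), f(r, θ) ≤ sinh(c₁ r), and, whenever a''(r) > 0, (1 − a(r)) c₁² sinh(c₁ r) > a''(r)(sinh(c₁ r) − f(r, θ)). Then the function f̃(r, θ) = (1 − a(r)) sinh(c₁ r) + a(r) f(r,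 θ) satisfies ∂²_r f̃(r, θ) > 0 for all r ≥ A and all θ. -/
/-!
Write `f̃ = (1 - a) g + a f` with `g r = sinh (c₁ r)`. Then
`∂²_r f̃ = (1 - a) g'' + a ∂²_r f + 2 a' (∂_r f - g') + a'' (f - g)`.
On the collar `[A, A + 1]` the slope term is nonnegative since `a' ≤ 0` and `∂_r f ≤ g'`, and the
last term is nonnegative when `a'' ≤ 0` (as `f ≤ g`) and is absorbed by `(1 - a) g''` otherwise;
the remaining convex combination of `g'' ≥ 0` and `∂²_r f > 0` is positive because `g'' > 0` as
soon as `a < 1`, i.e. beyond `A + 1/2`. Past `A + 1` the cutoff vanishes near `r`, so there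
`∂²_r f̃ = c₁² sinh (c₁ r) > 0`.
-/

open Filter Topology

lemma deriv_sinh_mul (c r : ℝ) : deriv (fun r => Real.sinh (c * r)) r = c * Real.cosh (c * r) := by
  rw [deriv_comp_mul_left c Real.sinh r, Real.deriv_sinh, smul_eq_mul]

lemma deriv_deriv_sinh_mul (c r : ℝ) :
    deriv (deriv fun r => Real.sinh (c * r)) r = c ^ 2 * Real.sinh (c * r) := by
  rw [funext (deriv_sinh_mul c), deriv_const_mul _ (by fun_prop), deriv_comp_mul_left c Real.cosh r,
    Real.deriv_cosh, smul_eq_mul]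
  ring

lemma hasDerivAt_blend {a g h : ℝ → ℝ} {a' g' h' x : ℝ} (ha : HasDerivAt a a' x)
    (hg : HasDerivAt g g' x) (hh : HasDerivAt h h' x) :
    HasDerivAt (fun x => (1 - a x) * g x + a x * h x)
      ((1 - a x) * g' + a x * h' + a' * (h x - g x)) x := by
  have hsum : HasDerivAt (fun x => (1 - a x) * g x + a x * h x)
      ((-a') * g x + (1 - a x) * g' + (a' * h x + a x * h')) x :=
    ((ha.const_sub 1).mul hg).add (ha.mul hh)
  convert hsum using 1
  ring

lemma deriv_deriv_blend {a g h : ℝ → ℝ} (ha : ContDiff ℝ 2 a) (hg : ContDiff ℝ 2 g)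
    (hh : ContDiff ℝ 2 h) (x : ℝ) :
    deriv (deriv fun x => (1 - a x) * g x + a x * h x) x =
      (1 - a x) * deriv (deriv g) x + a x * deriv (deriv h) x
        + 2 * deriv a x * (deriv h x - deriv g x) + deriv (deriv a) x * (h x - g x) := by
  have ha₁ := ha.differentiable two_ne_zero
  have hg₁ := hg.differentiable two_ne_zero
  have hh₁ := hh.differentiable two_ne_zero
  have ha₂ := ha.differentiable_deriv_two
  have hderiv : deriv (fun x => (1 - a x) * g x + a x * h x) =
      fun x => (1 - a x) * deriv g x + a x * deriv h x + deriv a x * (h x - g x) :=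
    funext fun x => (hasDerivAt_blend (ha₁ x).hasDerivAt (hg₁ x).hasDerivAt (hh₁ x).hasDerivAt).deriv
  rw [hderiv]
  have hsum : HasDerivAt (fun x => (1 - a x) * deriv g x + a x * deriv h x + deriv a x * (h x - g x))
      ((1 - a x) * deriv (deriv g) x + a x * deriv (deriv h) x + deriv a x * (deriv h x - deriv g x)
        + (deriv (deriv a) x * (h x - g x) + deriv a x * (deriv h x - deriv g x))) x :=
    (hasDerivAt_blend (ha₁ x).hasDerivAt (hg.differentiable_deriv_two x).hasDerivAt
    (hh.differentiable_deriv_two x).hasDerivAt).add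
    ((ha₂ x).hasDerivAt.mul ((hh₁ x).hasDerivAt.sub (hg₁ x).hasDerivAt))
  rw [hsum.deriv]
  ring

lemma blend_second_deriv_pos {a a' a'' g g' g'' h h' h'' : ℝ}
    (ha₀ : 0 ≤ a) (ha₁ : a ≤ 1) (ha' : a' ≤ 0) (hg'' : a < 1 → 0 < g'')
    (hh'' : 0 < h'') (hh' : h' ≤ g') (hh : h ≤ g) (ha'' : 0 < a'' → a'' * (g - h) < (1 - a) * g'') :
    0 < (1 - a) * g'' + a * h'' + 2 * a' * (h' - g') + a'' * (h - g) := by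
  have hslope : 0 ≤ 2 * a' * (h' - g') := by nlinarith
  rcases lt_or_ge 0 a'' with hpos | hnonpos
  · nlinarith [ha'' hpos]
  · have hcombination : 0 < (1 - a) * g'' + a * h'' := by
      rcases ha₁.lt_or_eq with hlt | rfl
      · nlinarith [hg'' hlt]
      · simpa using hh''
    nlinarith

/-- Negative curvature of the glued background surface:
if `a` is a nonincreasing `C²` cutoff with `a ≡ 1` for `r ≤ A + 1/2` and `a ≡ 0` for
`r ≥ A + 1`, and `f(·, θ)` is `C²` with `∂²_r f > 0`, `∂_r f ≤ c₁ cosh(c₁ r)`,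
`f ≤ sinh(c₁ r)` on `[A, A+1]`, and `(1 − a) c₁² sinh(c₁ r) > a''(sinh(c₁ r) − f)`
whenever `a'' > 0`, then `f̃(r,θ) = (1 − a(r)) sinh(c₁ r) + a(r) f(r,θ)` satisfies
`∂²_r f̃(r,θ) > 0` for all `r ≥ A` and all `θ`. -/
theorem statement19
    (A c₁ : ℝ) (hA : 0 ≤ A) (hc₁ : 0 < c₁)
    (a : ℝ → ℝ) (ha : ContDiff ℝ 2 a)
    (ha0 : ∀ r, 0 ≤ a r) (ha1 : ∀ r, a r ≤ 1)
    (ha' : ∀ r, deriv a r ≤ 0)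
    (haone : ∀ r, r ≤ A + 1/2 → a r = 1)
    (hazero : ∀ r, A + 1 ≤ r → a r = 0)
    (f : ℝ → ℝ → ℝ) (hf : ∀ θ, ContDiff ℝ 2 (fun r => f r θ))
    (hfrr : ∀ r ∈ Set.Icc A (A + 1), ∀ θ, 0 < deriv (deriv (fun r => f r θ)) r)
    (hfr : ∀ r ∈ Set.Icc A (A + 1), ∀ θ,
      deriv (fun r => f r θ) r ≤ c₁ * Real.cosh (c₁ * r))
    (hfs : ∀ r ∈ Set.Icc A (A + 1), ∀ θ, f r θ ≤ Real.sinh (c₁ * r))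
    (hcond : ∀ r ∈ Set.Icc A (A + 1), ∀ θ, 0 < deriv (deriv a) r →
      deriv (deriv a) r * (Real.sinh (c₁ * r) - f r θ) <
        (1 - a r) * c₁ ^ 2 * Real.sinh (c₁ * r)) :
    ∀ r, A ≤ r → ∀ θ,
      0 < deriv (deriv (fun r => (1 - a r) * Real.sinh (c₁ * r) + a r * f r θ)) r := by
  intro r hr θ
  have hsinh : A + 1 / 2 < r → 0 < c₁ ^ 2 * Real.sinh (c₁ * r) := fun hr' =>
    mul_pos (pow_pos hc₁ 2) (Real.sinh_pos_iff.2 (mul_pos hc₁ (by linarith)))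
  rw [deriv_deriv_blend ha (by fun_prop) (hf θ), deriv_deriv_sinh_mul, deriv_sinh_mul]
  rcases le_or_gt r (A + 1) with hr₁ | hr₁
  · have hrI : r ∈ Set.Icc A (A + 1) := ⟨hr, hr₁⟩
    refine blend_second_deriv_pos (ha0 r) (ha1 r) (ha' r) (fun hlt => hsinh ?_)
      (hfrr r hrI θ) (hfr r hrI θ) (hfs r hrI θ)
      (by simpa only [mul_assoc] using hcond r hrI θ)
    exact lt_of_not_ge fun hle => hlt.ne (haone r hle)
  · have hev : a =ᶠ[𝓝 r] fun _ => 0 :=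
      eventually_of_mem (Ioi_mem_nhds hr₁) fun x hx => hazero x (le_of_lt hx)
    rw [hev.eq_of_nhds, hev.deriv_eq, hev.deriv.deriv_eq]
    simpa using hsinh (by linarith)
end
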